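/- arXiv:0811.1026 — 6 statements merged into one kernel-verified Lean document; each statement's English description precedes it below -/
import Mathlib

section
/- Let K be a nonempty compact subset of a Hausdorff topological group G. The following are equivalent: (1) K is a regular element of the semigroup exp(G), i.e., K·L·K = K for some nonempty compact L ⊆ G; (2) K is uniquely invertible in exp(G), i.e., there exists exactly one nonempty compact L ⊆ G with K·L·K = K and L·K·L = L; (3) K = H·x for some compact subgroup H of G and some x ∈ G. -/
/-!
If `K * L * K = K`, then `P = K * L` is a nonempty compact subsemigroup of `G`. By the
Ellis–Numakura lemma it contains an idempotent, which in a group can only be `1`; applied to the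
subsemigroup `P ∩ s • P` the same argument gives `s⁻¹ ∈ P` for `s ∈ P`, so `P` is a compact
subgroup `H`. Writing `1 = k * l` with `k ∈ K`,
`l ∈ L` one gets `K = H * {k}`. Conversely a right coset `H * {x}` has the inverse `{x⁻¹} * H`,
and any inverse `L` satisfies `x * L ⊆ H` (from `K * L * K = K`) and
`L ⊇ {l} * K * {l} = {x⁻¹} * H` for every `l ∈ L` (from `L * K * L = L`).
-/

open Set Pointwise

section CompactSubsemigroup

variable {G : Type*} [Group G] [TopologicalSpace G] [ContinuousMul G] [T2Space G] {S : Set G}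

theorem one_mem_of_isCompact_of_mul_subset (hne : S.Nonempty) (hc : IsCompact S)
    (hmul : S * S ⊆ S) : (1 : G) ∈ S := by
  obtain ⟨e, he, hee⟩ := exists_idempotent_in_compact_subsemigroup continuous_mul_const S hne hc
    fun x hx y hy => hmul (mul_mem_mul hx hy)
  rwa [mul_eq_left.mp hee] at he

theorem inv_mem_of_isCompact_of_mul_subset (hc : IsCompact S) (hmul : S * S ⊆ S) {s : G}
    (hs : s ∈ S) : s⁻¹ ∈ S := by
  have hsub : (S ∩ s • S) * (S ∩ s • S) ⊆ S ∩ s • S := by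
    rintro _ ⟨a, ⟨ha, ha'⟩, b, ⟨hb, -⟩, rfl⟩
    obtain ⟨u, hu, rfl⟩ := ha'
    refine ⟨hmul (mul_mem_mul ha hb), u * b, hmul (mul_mem_mul hu hb), ?_⟩
    simp only [smul_eq_mul, mul_assoc]
  have hne : (S ∩ s • S).Nonempty := ⟨s * s, hmul (mul_mem_mul hs hs), smul_mem_smul_set hs⟩
  have h1 := one_mem_of_isCompact_of_mul_subset hne (hc.inter_right (hc.smul s).isClosed) hsub
  simpa using mem_smul_set_iff_inv_smul_mem.mp h1.2

theorem exists_subgroup_coe_eq_of_isCompact_of_mul_subset (hne : S.Nonempty) (hc : IsCompact S)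
    (hmul : S * S ⊆ S) : ∃ H : Subgroup G, (H : Set G) = S :=
  ⟨{ carrier := S
     mul_mem' := fun ha hb => hmul (mul_mem_mul ha hb)
     one_mem' := one_mem_of_isCompact_of_mul_subset hne hc hmul
     inv_mem' := inv_mem_of_isCompact_of_mul_subset hc hmul }, rfl⟩

theorem exists_isCompact_subgroup_mul_singleton_eq_of_mul_mul_eq {K L : Set G}
    (hK : K.Nonempty) (hKc : IsCompact K) (hL : L.Nonempty) (hLc : IsCompact L)
    (hKLK : K * L * K = K) :
    ∃ (H : Subgroup G) (x : G), IsCompact (H : Set G) ∧ K = (H : Set G) * {x} := by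
  have hmul : K * L * (K * L) ⊆ K * L := by rw [← mul_assoc, hKLK]
  obtain ⟨H, hH⟩ :=
    exists_subgroup_coe_eq_of_isCompact_of_mul_subset (hK.mul hL) (hKc.mul hLc) hmul
  obtain ⟨k, hk, l, hl, hkl⟩ : (1 : G) ∈ K * L := hH ▸ H.one_mem
  refine ⟨H, k, hH ▸ hKc.mul hLc, Subset.antisymm (fun y hy => ?_) ?_⟩
  · refine ⟨y * l, hH ▸ mul_mem_mul hy hl, k, rfl, ?_⟩
    show y * l * k = y
    rw [mul_assoc, mul_eq_one_comm.mp hkl, mul_one]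
  · calc (H : Set G) * {k} ⊆ K * L * K := hH ▸ mul_subset_mul_left (singleton_subset_iff.mpr hk)
      _ = K := hKLK

end CompactSubsemigroup

section RightCoset

variable {G : Type*} [Group G] (H : Subgroup G) (x : G)

theorem mul_singleton_mul_inv_singleton_mul :
    (H : Set G) * {x} * ({x⁻¹} * H) = H := by
  rw [mul_assoc, ← mul_assoc ({x} : Set G), singleton_mul_singleton, mul_inv_cancel, singleton_one,
    one_mul, coe_mul_coe]

theorem mul_singleton_mul_inv_singleton_mul_mul_singleton :
    (H : Set G) * {x} * ({x⁻¹} * H) * (H * {x}) = H * {x} := by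
  rw [mul_singleton_mul_inv_singleton_mul, ← mul_assoc, coe_mul_coe]

theorem inv_singleton_mul_mul_mul_singleton_mul_inv_singleton_mul :
    {x⁻¹} * (H : Set G) * (H * {x}) * ({x⁻¹} * H) = {x⁻¹} * H := by
  rw [mul_assoc, mul_singleton_mul_inv_singleton_mul, mul_assoc, coe_mul_coe]

variable {H x}

theorem eq_inv_singleton_mul_of_mul_mul_eq {L : Set G} (hL : L.Nonempty)
    (hKLK : (H : Set G) * {x} * L * (H * {x}) = H * {x}) (hLKL : L * (H * {x}) * L = L) :
    L = {x⁻¹} * H := by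
  have hxK : x ∈ (H : Set G) * {x} := ⟨1, H.one_mem, x, rfl, one_mul x⟩
  have hsub : L ⊆ {x⁻¹} * H := by
    intro l hl
    obtain ⟨h, hh, y, hy, hxlx⟩ : x * l * x ∈ (H : Set G) * {x} :=
      hKLK ▸ mul_mem_mul (mul_mem_mul hxK hl) hxK
    rw [mem_singleton_iff.mp hy] at hxlx
    exact ⟨x⁻¹, rfl, h, hh, by simp only [mul_right_cancel hxlx, inv_mul_cancel_left]⟩
  obtain ⟨l, hl⟩ := hL
  obtain ⟨_, rfl, m, hm, rfl⟩ := hsub hl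
  refine Subset.antisymm hsub ?_
  rintro _ ⟨_, rfl, h, hh, rfl⟩
  have hk : m⁻¹ * h * m⁻¹ * x ∈ (H : Set G) * {x} :=
    mul_mem_mul (H.mul_mem (H.mul_mem (H.inv_mem hm) hh) (H.inv_mem hm)) rfl
  have hmem := hLKL ▸ mul_mem_mul (mul_mem_mul hl hk) hl
  rwa [show x⁻¹ * m * (m⁻¹ * h * m⁻¹ * x) * (x⁻¹ * m) = x⁻¹ * h by group] at hmem

end RightCoset

theorem existsUnique_inverse_mul_singleton {G : Type*} [Group G] [TopologicalSpace G]
    [ContinuousMul G] {H : Subgroup G} (hH : IsCompact (H : Set G)) (x : G) :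
    ∃! L : Set G, L.Nonempty ∧ IsCompact L ∧
      (H : Set G) * {x} * L * (H * {x}) = H * {x} ∧ L * (H * {x}) * L = L :=
  ⟨{x⁻¹} * H,
    ⟨(singleton_nonempty _).mul (OneMemClass.coe_nonempty H), isCompact_singleton.mul hH,
      mul_singleton_mul_inv_singleton_mul_mul_singleton H x,
      inv_singleton_mul_mul_mul_singleton_mul_inv_singleton_mul H x⟩,
    fun _ ⟨hL, _, hKLK, hLKL⟩ => eq_inv_singleton_mul_of_mul_mul_eq hL hKLK hLKL⟩

/-- For a nonempty compact subset `K` of a Hausdorff topological group the following are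
equivalent: `K` is a regular element of `exp G`; `K` is uniquely invertible in `exp G`;
`K` is a right coset `H * {x}` of a compact subgroup `H`. -/
theorem regular_iff_uniquely_invertible_iff_coset {G : Type*} [Group G] [TopologicalSpace G]
    [IsTopologicalGroup G] [T2Space G] {K : Set G} (hne : K.Nonempty) (hcomp : IsCompact K) :
    ((∃ L : Set G, L.Nonempty ∧ IsCompact L ∧ K * L * K = K) ↔
      (∃! L : Set G, L.Nonempty ∧ IsCompact L ∧ K * L * K = K ∧ L * K * L = L)) ∧
    ((∃ L : Set G, L.Nonempty ∧ IsCompact L ∧ K * L * K = K) ↔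
      (∃ (H : Subgroup G) (x : G), IsCompact (H : Set G) ∧ K = (H : Set G) * {x})) := by
  have regular_to_coset : (∃ L : Set G, L.Nonempty ∧ IsCompact L ∧ K * L * K = K) →
      ∃ (H : Subgroup G) (x : G), IsCompact (H : Set G) ∧ K = (H : Set G) * {x} :=
    fun ⟨_, hL, hLc, hKLK⟩ =>
      exists_isCompact_subgroup_mul_singleton_eq_of_mul_mul_eq hne hcomp hL hLc hKLK
  have coset_to_unique : (∃ (H : Subgroup G) (x : G), IsCompact (H : Set G) ∧
      K = (H : Set G) * {x}) →
      ∃! L : Set G, L.Nonempty ∧ IsCompact L ∧ K * L * K = K ∧ L * K * L = L := by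
    rintro ⟨H, x, hH, rfl⟩
    exact existsUnique_inverse_mul_singleton hH x
  have unique_to_regular : (∃! L : Set G, L.Nonempty ∧ IsCompact L ∧ K * L * K = K ∧
      L * K * L = L) → ∃ L : Set G, L.Nonempty ∧ IsCompact L ∧ K * L * K = K :=
    fun ⟨L, ⟨hL, hLc, hKLK, _⟩, _⟩ => ⟨L, hL, hLc, hKLK⟩
  exact ⟨⟨coset_to_unique ∘ regular_to_coset, unique_to_regular⟩,
    regular_to_coset, unique_to_regular ∘ coset_to_unique⟩
end

section
/- If μ and ν are Radon probability measures on a Hausdorff topological group G satisfying μ∗ν∗μ = μ, then the supports S_μ and S_ν are compact subsets of G; moreover, the support of the idempotent measure μ∗ν is a compact subgroup H of G and S_μ = H·x for some x ∈ G. -/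
open MeasureTheory Set Pointwise Topology

/-- A Radon probability measure: a Borel probability measure such that for every `ε > 0`
there is a compact set of measure `> 1 - ε`. -/
def IsRadonProb {G : Type*} [TopologicalSpace G] [MeasurableSpace G]
    (μ : Measure G) : Prop :=
  μ Set.univ = 1 ∧ ∀ ε : ℝ, 0 < ε → ∃ K : Set G, IsCompact K ∧ 1 - ENNReal.ofReal ε < μ K

/-- Convolution of measures: the pushforward of the product measure under multiplication. -/
noncomputable def mconv {G : Type*} [MeasurableSpace G] [Mul G]
    (μ ν : Measure G) : Measure G :=
  (μ.prod ν).map (fun p : G × G => p.1 * p.2)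

/-- The support of a measure: all points whose every open neighbourhood has positive measure. -/
def msupport {G : Type*} [TopologicalSpace G] [MeasurableSpace G] (μ : Measure G) : Set G :=
  {x | ∀ U : Set G, IsOpen U → x ∈ U → 0 < μ U}

/-- The space of Radon probability measures on `G`. -/
def PM (G : Type*) [TopologicalSpace G] [MeasurableSpace G] : Type _ :=
  {μ : Measure G // IsRadonProb μ}

/-- The weak topology on `PM G`, generated by the sub-basic sets `{μ | μ U > a}`
for `U ⊆ G` open and `a : ℝ`. -/
instance PM.topologicalSpace (G : Type*) [TopologicalSpace G] [MeasurableSpace G] :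
    TopologicalSpace (PM G) :=
  TopologicalSpace.generateFrom
    {s | ∃ (U : Set G) (a : ℝ), IsOpen U ∧ s = {μ : PM G | ENNReal.ofReal a < μ.1 U}}

/-!
`ω = μ ∗ ν` is idempotent by associativity. For a compact `K` with `ω Kᶜ < ω K`, the function
`f x = ω (x⁻¹ K)` is `ω`-harmonic, and since `ω ∗ ω = ω` the "variance"
`∫∫ (f (x y) - f x)² dω(x) dω(y)` vanishes, so `f (x₀ y) = f x₀` for `ω`-a.e. `y`, where `x₀` is
chosen with `f x₀ > ω Kᶜ` (possible as `∫ f dω = ω K`). Then `(x₀ y)⁻¹ K` meets `K`, i.e.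
`x₀ y ∈ K K⁻¹`, for a.e. `y`, so the support of `ω` is compact.
It is a compact subsemigroup, hence (Ellis–Numakura) a subgroup `H`. Finally `H S_μ ⊆ S_μ` and
`S_μ S_ν ⊆ H` force `S_μ = H a` and `S_ν ⊆ a⁻¹ H` for any `a ∈ S_μ`.
-/

open scoped ENNReal

theorem ENNReal.mul_self_add_mul_self {a b : ℝ≥0∞} (ha : a ≠ ∞) (hb : b ≠ ∞) :
    a * a + b * b = 2 * (a * b) + ((a - b) * (a - b) + (b - a) * (b - a)) := by
  wlog hab : a ≤ b generalizing a b
  · rw [add_comm (a * a), this hb ha (le_of_not_ge hab), mul_comm b a, add_comm ((b - a) * _)]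
  obtain ⟨d, rfl⟩ := exists_add_of_le hab
  rw [tsub_eq_zero_of_le hab, ENNReal.add_sub_cancel_left ha]
  ring

theorem exists_subgroup_coe_eq_of_isCompact {G : Type*} [Group G] [TopologicalSpace G]
    [ContinuousMul G] [T2Space G] {S : Set G} (hS : IsCompact S) (hne : S.Nonempty)
    (hmul : S * S ⊆ S) : ∃ H : Subgroup G, (H : Set G) = S := by
  have inv_mem : ∀ x ∈ S, x⁻¹ ∈ S := by
    intro x hx
    -- `x • S` is a compact subsemigroup, as `(x s) (x t) = x (s x t)`; its idempotent must be `1`.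
    obtain ⟨_, ⟨s, hs, rfl⟩, hidem⟩ := exists_idempotent_in_compact_subsemigroup
      continuous_mul_const ((x * ·) '' S) (hne.image _) (hS.image (continuous_const_mul x))
      (by
        rintro _ ⟨s, hs, rfl⟩ _ ⟨t, ht, rfl⟩
        exact ⟨s * x * t, hmul (mul_mem_mul (hmul (mul_mem_mul hs hx)) ht), by group⟩)
    rwa [← eq_inv_of_mul_eq_one_right (mul_eq_left.mp hidem)]
  have one_mem : (1 : G) ∈ S := by
    obtain ⟨x, hx⟩ := hne
    simpa using hmul (mul_mem_mul hx (inv_mem x hx))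
  exact ⟨{ carrier := S
           mul_mem' := fun ha hb => hmul (mul_mem_mul ha hb)
           one_mem' := one_mem
           inv_mem' := inv_mem _ }, rfl⟩

section Radon

variable {X : Type*} [TopologicalSpace X] [MeasurableSpace X]

theorem IsRadonProb.isProbabilityMeasure {μ : Measure X} (hμ : IsRadonProb μ) :
    IsProbabilityMeasure μ :=
  ⟨hμ.1⟩

theorem IsRadonProb.isTightMeasureSet [T2Space X] [OpensMeasurableSpace X] {μ : Measure X}
    (hμ : IsRadonProb μ) : IsTightMeasureSet {μ} := by
  have := hμ.isProbabilityMeasure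
  rw [isTightMeasureSet_iff_exists_isCompact_measure_compl_le]
  intro ε hε
  rcases eq_or_ne ε ∞ with rfl | hε_top
  · exact ⟨∅, isCompact_empty, by simp⟩
  obtain ⟨K, hK, hμK⟩ := hμ.2 ε.toReal (ENNReal.toReal_pos hε.ne' hε_top)
  refine ⟨K, hK, ?_⟩
  rw [ENNReal.ofReal_toReal hε_top] at hμK
  simpa [prob_compl_eq_one_sub hK.measurableSet, tsub_le_iff_tsub_le, add_comm] using hμK.le

end Radon

namespace MeasureTheory

theorem ae_eq_of_lintegral_mul_self_eq {α : Type*} [MeasurableSpace α]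
    {ρ : Measure α} {g h : α → ℝ≥0∞} (hg : AEMeasurable g ρ) (hh : AEMeasurable h ρ)
    (hg_top : ∀ a, g a ≠ ∞) (hh_top : ∀ a, h a ≠ ∞) (hgh_top : ∫⁻ a, g a * h a ∂ρ ≠ ∞)
    (hgg : ∫⁻ a, g a * g a ∂ρ = ∫⁻ a, g a * h a ∂ρ)
    (hhh : ∫⁻ a, h a * h a ∂ρ = ∫⁻ a, g a * h a ∂ρ) :
    g =ᵐ[ρ] h := by
  set J := ∫⁻ a, g a * h a ∂ρ
  set q : α → ℝ≥0∞ := fun a => (g a - h a) * (g a - h a) + (h a - g a) * (h a - g a)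
  have hq : AEMeasurable q ρ := by fun_prop
  have hsum : J + J = J + J + ∫⁻ a, q a ∂ρ := by
    calc J + J = ∫⁻ a, (g a * g a + h a * h a) ∂ρ := by
          rw [lintegral_add_left' (by fun_prop), hgg, hhh]
      _ = ∫⁻ a, (2 * (g a * h a) + q a) ∂ρ :=
          lintegral_congr fun a => ENNReal.mul_self_add_mul_self (hg_top a) (hh_top a)
      _ = J + J + ∫⁻ a, q a ∂ρ := by
          rw [lintegral_add_left' (by fun_prop), lintegral_const_mul' _ _ (by simp), two_mul]
  have hq0 : ∫⁻ a, q a ∂ρ = 0 := by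
    refine (ENNReal.add_right_inj (by finiteness : J + J ≠ ∞)).mp ?_
    rw [add_zero, ← hsum]
  filter_upwards [(lintegral_eq_zero_iff' hq).mp hq0] with a ha
  obtain ⟨h₁, h₂⟩ := add_eq_zero.mp ha
  exact le_antisymm (tsub_eq_zero_iff_le.mp (mul_self_eq_zero.mp h₁))
    (tsub_eq_zero_iff_le.mp (mul_self_eq_zero.mp h₂))

section Tight

variable {X : Type*} [TopologicalSpace X] [MeasurableSpace X]

theorem exists_isCompact_measure_compl_lt [T2Space X] [OpensMeasurableSpace X]
    {μ : Measure X} [IsProbabilityMeasure μ] (hμ : IsTightMeasureSet {μ}) :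
    ∃ K, IsCompact K ∧ μ Kᶜ < μ K := by
  obtain ⟨K, hK, hKc⟩ :=
    isTightMeasureSet_iff_exists_isCompact_measure_compl_le.mp hμ 3⁻¹ (by simp)
  have hK_eq : μ K = 1 - μ Kᶜ := by
    simpa using prob_compl_eq_one_sub (μ := μ) hK.measurableSet.compl
  refine ⟨K, hK, hK_eq ▸ lt_tsub_iff_right.2 ?_⟩
  calc μ Kᶜ + μ Kᶜ ≤ 3⁻¹ + 3⁻¹ := add_le_add (hKc μ rfl) (hKc μ rfl)
    _ < 3⁻¹ + 3⁻¹ + 3⁻¹ := ENNReal.lt_add_right (by simp) (by simp)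
    _ = 1 := ENNReal.inv_three_add_inv_three

theorem Measure.support_nonempty_of_isTightMeasureSet [T2Space X] [OpensMeasurableSpace X]
    {μ : Measure X} [IsProbabilityMeasure μ] (hμ : IsTightMeasureSet {μ}) :
    μ.support.Nonempty := by
  obtain ⟨K, hK, hKc⟩ := exists_isCompact_measure_compl_lt hμ
  by_contra! h
  have : μ K = 0 := measure_eq_zero_of_isCompact_subset_compl_support hK (by simp [h])
  simp [this] at hKc

end Tight

theorem IsTightMeasureSet.mconv {M : Type*} [Monoid M] [TopologicalSpace M] [ContinuousMul M]
    [T2Space M] [MeasurableSpace M] [OpensMeasurableSpace M] {μ ν : Measure M}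
    [IsProbabilityMeasure μ] [IsProbabilityMeasure ν]
    (hμ : IsTightMeasureSet {μ}) (hν : IsTightMeasureSet {ν}) : IsTightMeasureSet {μ ∗ₘ ν} := by
  have : IsTightMeasureSet {μ.prod ν} := .prodMk (by simpa using hμ) (by simpa using hν)
  simpa [Measure.mconv] using this.map continuous_mul

namespace Measure

section Monoid

variable {M : Type*} [Monoid M] [MeasurableSpace M] [MeasurableMul₂ M]

theorem mconv_apply (μ ν : Measure M) [SFinite ν] {s : Set M} (hs : MeasurableSet s) :
    (μ ∗ₘ ν) s = ∫⁻ x, ν ((x * ·) ⁻¹' s) ∂μ := by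
  rw [mconv, map_apply measurable_mul hs, prod_apply (measurable_mul hs)]
  rfl

theorem support_mul_support_subset_support_mconv [TopologicalSpace M] [ContinuousMul M]
    (μ ν : Measure M) [SFinite ν] : μ.support * ν.support ⊆ (μ ∗ₘ ν).support := by
  rintro _ ⟨x, hx, y, hy, rfl⟩
  rw [support_eq_forall_isOpen] at hx hy ⊢
  intro U hxyU hU
  obtain ⟨V, W, hV, hW, hxV, hyW, hVW⟩ :=
    isOpen_prod_iff.mp (hU.preimage continuous_mul) x y hxyU
  calc 0 < μ V * ν W := ENNReal.mul_pos (hx V hxV hV).ne' (hy W hyW hW).ne'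
    _ = μ.prod ν (V ×ˢ W) := (prod_prod V W).symm
    _ ≤ μ.prod ν ((fun p : M × M => p.1 * p.2) ⁻¹' U) := measure_mono hVW
    _ ≤ (μ ∗ₘ ν) U := le_map_apply (by fun_prop) U

theorem ae_mul_eq_of_lintegral_mul_eq {ω : Measure M} [IsProbabilityMeasure ω]
    (hω : ω ∗ₘ ω = ω) {f : M → ℝ≥0∞} (hf : Measurable f) {C : ℝ≥0∞} (hC : C ≠ ∞)
    (hfC : ∀ x, f x ≤ C) (hharm : ∀ x, ∫⁻ y, f (x * y) ∂ω = f x) :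
    ∀ᵐ p ∂ω.prod ω, f (p.1 * p.2) = f p.1 := by
  have hfin : ∫⁻ x, f x * f x ∂ω ≠ ∞ := by
    refine ne_top_of_le_ne_top (by finiteness : C * C ≠ ∞) ?_
    calc ∫⁻ x, f x * f x ∂ω ≤ ∫⁻ _, C * C ∂ω := lintegral_mono fun x => mul_le_mul' (hfC x) (hfC x)
      _ = C * C := by simp
  have hcross : ∫⁻ p, f p.1 * f (p.1 * p.2) ∂ω.prod ω = ∫⁻ x, f x * f x ∂ω := by
    rw [lintegral_prod _ (by fun_prop)]
    refine lintegral_congr fun x => ?_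
    dsimp only
    rw [lintegral_const_mul _ (by fun_prop), hharm x]
  refine (ae_eq_of_lintegral_mul_self_eq (by fun_prop) (by fun_prop)
    (fun p => ne_top_of_le_ne_top hC (hfC _)) (fun p => ne_top_of_le_ne_top hC (hfC _))
    (hcross ▸ hfin) ?_ ?_).symm
  · rw [hcross, lintegral_prod _ (by fun_prop)]
    simp
  · rw [hcross, ← lintegral_mconv_eq_lintegral_prod (f := fun x => f x * f x) (by fun_prop), hω]

end Monoid

theorem mem_mul_inv_of_measure_compl_lt {G : Type*} [Group G]
    [MeasurableSpace G] {ω : Measure G} {K : Set G} {z : G}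
    (h : ω Kᶜ < ω ((z * ·) ⁻¹' K)) : z ∈ K * K⁻¹ := by
  obtain ⟨w, hzw, hw⟩ := not_disjoint_iff_nonempty_inter.mp fun hd =>
    (measure_mono hd.subset_compl_right).not_gt h
  exact ⟨z * w, hzw, w⁻¹, inv_mem_inv.mpr hw, mul_inv_cancel_right z w⟩

theorem isCompact_support_of_mconv_self {G : Type*} [Group G] [TopologicalSpace G]
    [IsTopologicalGroup G] [T2Space G] [MeasurableSpace G] [BorelSpace G] [MeasurableMul₂ G]
    {ω : Measure G} [IsProbabilityMeasure ω]
    (hω : ω ∗ₘ ω = ω) (hT : IsTightMeasureSet {ω}) : IsCompact ω.support := by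
  obtain ⟨K, hK, hKc⟩ := exists_isCompact_measure_compl_lt hT
  set f : G → ℝ≥0∞ := fun x => ω ((x * ·) ⁻¹' K)
  have hf : Measurable f := measurable_measure_prodMk_left (measurable_mul hK.measurableSet)
  have hharm : ∀ x, ∫⁻ y, f (x * y) ∂ω = f x := fun x => by
    calc ∫⁻ y, f (x * y) ∂ω = (ω ∗ₘ ω) ((x * ·) ⁻¹' K) := by
          rw [mconv_apply _ _ (measurable_const_mul x hK.measurableSet)]
          simp only [f, preimage_preimage, mul_assoc]
      _ = f x := by rw [hω]
  have hint : ∫⁻ x, f x ∂ω = ω K := by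
    rw [← mconv_apply _ _ hK.measurableSet, hω]
  obtain ⟨x₀, hx₀, hfx₀⟩ : ∃ x₀, (∀ᵐ y ∂ω, f (x₀ * y) = f x₀) ∧ ω Kᶜ < f x₀ := by
    by_contra! h
    have hae : ∀ᵐ x ∂ω, f x ≤ ω Kᶜ :=
      (ae_ae_of_ae_prod (ae_mul_eq_of_lintegral_mul_eq hω hf ENNReal.one_ne_top
        (fun x => prob_le_one) hharm)).mono h
    have : ∫⁻ x, f x ∂ω ≤ ω Kᶜ := by
      calc ∫⁻ x, f x ∂ω ≤ ∫⁻ _, ω Kᶜ ∂ω := lintegral_mono_ae hae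
        _ = ω Kᶜ := by simp
    exact (hint ▸ this).not_gt hKc
  have hsub : ∀ᵐ y ∂ω, y ∈ {x₀⁻¹} * (K * K⁻¹) := by
    filter_upwards [hx₀] with y hy
    exact ⟨x₀⁻¹, rfl, x₀ * y, mem_mul_inv_of_measure_compl_lt (hy ▸ hfx₀), by group⟩
  have hC : IsCompact ({x₀⁻¹} * (K * K⁻¹)) := isCompact_singleton.mul (hK.mul hK.inv)
  exact hC.of_isClosed_subset isClosed_support (support_subset_of_isClosed hC.isClosed hsub)

end Measure

end MeasureTheory

theorem msupport_eq_support {X : Type*} [TopologicalSpace X] [MeasurableSpace X]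
    (μ : Measure X) : msupport μ = μ.support := by
  ext x
  simp only [msupport, Measure.support_eq_forall_isOpen, mem_ofPred_eq]
  exact forall_congr' fun U => forall_comm

theorem mconv_eq_mconv {M : Type*} [Monoid M] [MeasurableSpace M] (μ ν : Measure M) :
    mconv μ ν = μ ∗ₘ ν :=
  rfl

/-- If `μ ∗ ν ∗ μ = μ` for Radon probability measures on a Hausdorff topological group, then
the supports of `μ` and `ν` are compact, the support of the idempotent `μ ∗ ν` is a compact
subgroup `H`, and the support of `μ` is a right coset of `H`. -/
theorem supports_of_regular {G : Type*} [Group G] [TopologicalSpace G] [IsTopologicalGroup G]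
    [T2Space G] [MeasurableSpace G] [BorelSpace G] [MeasurableMul₂ G]
    {μ ν : Measure G} (hμ : IsRadonProb μ) (hν : IsRadonProb ν)
    (hreg : mconv (mconv μ ν) μ = μ) :
    IsCompact (msupport μ) ∧ IsCompact (msupport ν) ∧
      ∃ H : Subgroup G, IsCompact (H : Set G) ∧ msupport (mconv μ ν) = (H : Set G) ∧
        ∃ x : G, msupport μ = (H : Set G) * {x} := by
  have := hμ.isProbabilityMeasure
  have := hν.isProbabilityMeasure
  simp only [msupport_eq_support, mconv_eq_mconv] at hreg ⊢
  have hidem : (μ ∗ₘ ν) ∗ₘ (μ ∗ₘ ν) = μ ∗ₘ ν := by rw [← Measure.mconv_assoc, hreg]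
  have htight := hμ.isTightMeasureSet.mconv hν.isTightMeasureSet
  have hHc := Measure.isCompact_support_of_mconv_self hidem htight
  obtain ⟨H, hH⟩ := exists_subgroup_coe_eq_of_isCompact hHc
    (Measure.support_nonempty_of_isTightMeasureSet htight)
    (by simpa only [hidem] using Measure.support_mul_support_subset_support_mconv (μ ∗ₘ ν) (μ ∗ₘ ν))
  rw [← hH] at hHc ⊢
  have hHμ : (H : Set G) * μ.support ⊆ μ.support := by
    simpa only [hH, hreg] using Measure.support_mul_support_subset_support_mconv (μ ∗ₘ ν) μ
  have hμν : μ.support * ν.support ⊆ H := by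
    simpa only [hH] using Measure.support_mul_support_subset_support_mconv μ ν
  obtain ⟨a, ha⟩ := Measure.support_nonempty_of_isTightMeasureSet hμ.isTightMeasureSet
  obtain ⟨b, hb⟩ := Measure.support_nonempty_of_isTightMeasureSet hν.isTightMeasureSet
  have hcoset : μ.support = (H : Set G) * {a} := by
    refine Subset.antisymm (fun a' ha' => ⟨a' * b * (a * b)⁻¹, ?_, a, rfl, by group⟩)
      ((mul_subset_mul_left (singleton_subset_iff.mpr ha)).trans hHμ)
    exact H.mul_mem (hμν (mul_mem_mul ha' hb)) (H.inv_mem (hμν (mul_mem_mul ha hb)))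
  have hν_sub : ν.support ⊆ {a⁻¹} * (H : Set G) :=
    fun y hy => ⟨a⁻¹, rfl, a * y, hμν (mul_mem_mul ha hy), by group⟩
  refine ⟨hcoset ▸ hHc.mul isCompact_singleton, ?_, H, hHc, rfl, a, hcoset⟩
  exact (isCompact_singleton.mul hHc).of_isClosed_subset Measure.isClosed_support hν_sub
end

section
/- Let G be a Hausdorff topological group and let S be a set of Radon probability measures on G which is closed under convolution and regular, i.e., for every μ ∈ S there is ν ∈ S with μ∗ν∗μ = μ. Then S is an inverse semigroup: every μ ∈ S has a unique inverse in S (a unique ν ∈ S with μ∗ν∗μ = μ and ν∗μ∗ν = ν), and any two idempotents e, f ∈ S (e∗e = e, f∗f = f) commute: e∗f = f∗e. -/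
/-
If `g ∗ g = g`, `p ∗ g = p` and `g ∗ p = g`, then `p = g`; the mirror statement
(`p ∗ g = g`, `g ∗ p = p`) follows by applying this to `μ ↦ μ.inv`, which reverses convolution.
The averaging operators `T_α φ (x) = ∫ φ (x y) dα(y)` satisfy `T_α T_β = T_{α ∗ β}`, and by
Jensen `T_α` is a contraction of `L²(g)` whenever `g ∗ α = g`. For `a = T_p φ` and `b = T_g φ` this gives `T_p b = a` and
`T_g (a + b) = 2 b`, hence `‖a‖ ≤ ‖b‖ ≤ ‖(a + b) / 2‖`, and the parallelogram law forces `a = b`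
in `L²(g)`. With `φ` an indicator, `p (x⁻¹ B) = g (x⁻¹ B)` for `g`-a.e. `x`, and this determines
`p` through the shear `(x, y) ↦ (x, x y)` of `g ⊗ p`.

So in the subsemigroup `S` every 𝓛-class and every 𝓡-class contains at most one idempotent. For a
regular semigroup this classically makes products of idempotents idempotent, idempotents commute,
and inverses unique.
-/

open MeasureTheory Set Pointwise Topology

section L2

variable {Ω : Type*} [MeasurableSpace Ω] {μ : Measure Ω}

lemma sq_integral_le_integral_sq [IsProbabilityMeasure μ] {f : Ω → ℝ} (hf : Integrable f μ)
    (hf2 : Integrable (fun x => f x ^ 2) μ) : (∫ x, f x ∂μ) ^ 2 ≤ ∫ x, f x ^ 2 ∂μ :=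
  even_two.convexOn_pow.map_integral_le (continuous_pow 2).continuousOn isClosed_univ
    (ae_of_all _ fun _ => mem_univ _) hf hf2

lemma ae_eq_of_integral_sq_le {a b : Ω → ℝ} (ha : MemLp a 2 μ) (hb : MemLp b 2 μ)
    (h₁ : ∫ x, a x ^ 2 ∂μ ≤ ∫ x, b x ^ 2 ∂μ)
    (h₂ : ∫ x, (b x + b x) ^ 2 ∂μ ≤ ∫ x, (a x + b x) ^ 2 ∂μ) : a =ᵐ[μ] b := by
  have parallelogram : ∫ x, (a x - b x) ^ 2 ∂μ
      = 2 * ∫ x, a x ^ 2 ∂μ + 2 * ∫ x, b x ^ 2 ∂μ - ∫ x, (a x + b x) ^ 2 ∂μ := by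
    rw [← integral_const_mul, ← integral_const_mul, ← integral_add, ← integral_sub]
    · congr 1 with x; ring
    · exact (ha.integrable_sq.const_mul 2).add (hb.integrable_sq.const_mul 2)
    · exact (ha.add hb).integrable_sq
    · exact ha.integrable_sq.const_mul 2
    · exact hb.integrable_sq.const_mul 2
  have hbb : ∫ x, (b x + b x) ^ 2 ∂μ = 4 * ∫ x, b x ^ 2 ∂μ := by
    rw [← integral_const_mul]; congr 1 with x; ring
  have hzero : ∫ x, (a x - b x) ^ 2 ∂μ = 0 :=
    le_antisymm (by linarith) (integral_nonneg fun _ => sq_nonneg _)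
  filter_upwards [(integral_eq_zero_iff_of_nonneg (fun _ => sq_nonneg _)
    (ha.sub hb).integrable_sq).mp hzero] with x hx
  simpa [sub_eq_zero] using hx

end L2

section RightAverage

variable {G : Type*} [Monoid G] [MeasurableSpace G] {α β μ : Measure G} {φ ψ : G → ℝ} {C D : ℝ}

noncomputable def rightAvg (α : Measure G) (φ : G → ℝ) (x : G) : ℝ := ∫ y, φ (x * y) ∂α

lemma norm_rightAvg_le [IsProbabilityMeasure α] (hφC : ∀ x, ‖φ x‖ ≤ C) (x : G) :
    ‖rightAvg α φ x‖ ≤ C := by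
  simpa [rightAvg] using
    norm_integral_le_of_norm_le_const (μ := α) (ae_of_all _ fun y => hφC (x * y))

variable [MeasurableMul₂ G]

lemma measurable_rightAvg [SFinite α] (hφ : Measurable φ) : Measurable (rightAvg α φ) :=
  (hφ.comp measurable_mul).stronglyMeasurable.integral_prod_right'.measurable

lemma integrable_comp_mul_left_of_bound [IsFiniteMeasure α] (hφ : Measurable φ)
    (hφC : ∀ x, ‖φ x‖ ≤ C) (x : G) : Integrable (fun y => φ (x * y)) α :=
  .of_bound (hφ.comp (measurable_const_mul x)).aestronglyMeasurable C
    (ae_of_all _ fun _ => hφC _)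

lemma rightAvg_rightAvg [IsFiniteMeasure α] [IsFiniteMeasure β] (hφ : Measurable φ)
    (hφC : ∀ x, ‖φ x‖ ≤ C) : rightAvg α (rightAvg β φ) = rightAvg (α ∗ₘ β) φ := by
  funext x
  rw [rightAvg, rightAvg, integral_mconv (integrable_comp_mul_left_of_bound hφ hφC x)]
  simp only [rightAvg, mul_assoc]

lemma rightAvg_add [IsFiniteMeasure α] (hφ : Measurable φ) (hφC : ∀ x, ‖φ x‖ ≤ C)
    (hψ : Measurable ψ) (hψD : ∀ x, ‖ψ x‖ ≤ D) :
    rightAvg α (φ + ψ) = rightAvg α φ + rightAvg α ψ := by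
  funext x
  exact integral_add (integrable_comp_mul_left_of_bound hφ hφC x)
    (integrable_comp_mul_left_of_bound hψ hψD x)

lemma integral_sq_rightAvg_le [IsFiniteMeasure μ] [IsProbabilityMeasure α] (hμα : μ ∗ₘ α = μ)
    (hφ : Measurable φ) (hφC : ∀ x, ‖φ x‖ ≤ C) :
    ∫ x, rightAvg α φ x ^ 2 ∂μ ≤ ∫ x, φ x ^ 2 ∂μ := by
  have hφ2 : Measurable fun x => φ x ^ 2 := hφ.pow_const 2
  have hφ2C : ∀ x, ‖φ x ^ 2‖ ≤ C ^ 2 := fun x => by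
    rw [norm_pow]; exact pow_le_pow_left₀ (norm_nonneg _) (hφC x) 2
  calc ∫ x, rightAvg α φ x ^ 2 ∂μ ≤ ∫ x, rightAvg α (fun z => φ z ^ 2) x ∂μ := by
        refine integral_mono ?_ ?_ fun x => sq_integral_le_integral_sq
          (integrable_comp_mul_left_of_bound hφ hφC x)
          (integrable_comp_mul_left_of_bound hφ2 hφ2C x)
        · exact (MemLp.of_bound (measurable_rightAvg hφ).aestronglyMeasurable C
            (ae_of_all _ (norm_rightAvg_le hφC))).integrable_sq
        · exact .of_bound (measurable_rightAvg hφ2).aestronglyMeasurable _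
            (ae_of_all _ (norm_rightAvg_le hφ2C))
    _ = ∫ z, φ z ^ 2 ∂(μ ∗ₘ α) :=
        (integral_mconv (.of_bound hφ2.aestronglyMeasurable _ (ae_of_all _ hφ2C))).symm
    _ = ∫ x, φ x ^ 2 ∂μ := by rw [hμα]

lemma rightAvg_indicator_one [IsFiniteMeasure α] {B : Set G} (hB : MeasurableSet B) (x : G) :
    rightAvg α (B.indicator 1) x = α.real ((x * ·) ⁻¹' B) := by
  rw [rightAvg, ← integral_indicator_one ((measurable_const_mul x) hB)]
  rfl

lemma rightAvg_ae_eq_of_mconv_eq [IsProbabilityMeasure μ] [IsProbabilityMeasure α]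
    (hμμ : μ ∗ₘ μ = μ) (hαμ : α ∗ₘ μ = α) (hμα : μ ∗ₘ α = μ) (hφ : Measurable φ)
    (hφC : ∀ x, ‖φ x‖ ≤ C) : rightAvg α φ =ᵐ[μ] rightAvg μ φ := by
  set a := rightAvg α φ
  set b := rightAvg μ φ
  have ha : Measurable a := measurable_rightAvg hφ
  have hb : Measurable b := measurable_rightAvg hφ
  have haC : ∀ x, ‖a x‖ ≤ C := norm_rightAvg_le hφC
  have hbC : ∀ x, ‖b x‖ ≤ C := norm_rightAvg_le hφC
  have hαb : rightAvg α b = a := by rw [rightAvg_rightAvg hφ hφC, hαμ]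
  have hμa : rightAvg μ a = b := by rw [rightAvg_rightAvg hφ hφC, hμα]
  have hμb : rightAvg μ b = b := by rw [rightAvg_rightAvg hφ hφC, hμμ]
  refine ae_eq_of_integral_sq_le (.of_bound ha.aestronglyMeasurable C (ae_of_all _ haC))
    (.of_bound hb.aestronglyMeasurable C (ae_of_all _ hbC)) ?_ ?_
  · simpa only [hαb] using integral_sq_rightAvg_le hμα hb hbC
  · have := integral_sq_rightAvg_le hμμ (ha.add hb)
      fun x => (norm_add_le _ _).trans (add_le_add (haC x) (hbC x))
    rwa [rightAvg_add ha haC hb hbC, hμa, hμb] at this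

end RightAverage

section Group

variable {G : Type*} [Group G] [MeasurableSpace G] [MeasurableMul₂ G] [MeasurableInv G]
  {g p q : Measure G}

lemma inv_mconv (μ ν : Measure G) [SFinite μ] [SFinite ν] : (μ ∗ₘ ν).inv = ν.inv ∗ₘ μ.inv := by
  simp only [Measure.inv, Measure.mconv]
  rw [Measure.map_prod_map _ _ measurable_inv measurable_inv, ← Measure.prod_swap,
    Measure.map_map measurable_inv measurable_mul, Measure.map_map measurable_mul
      (measurable_inv.prodMap measurable_inv), Measure.map_map (by fun_prop) measurable_swap]
  congr 1 with z
  simp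

lemma map_shearMulRight_prod_apply_prod [SFinite q] {A B : Set G} (hA : MeasurableSet A)
    (hB : MeasurableSet B) :
    (g.prod q).map (MeasurableEquiv.shearMulRight G) (A ×ˢ B)
      = ∫⁻ x in A, q ((x * ·) ⁻¹' B) ∂g := by
  rw [MeasurableEquiv.map_apply, Measure.prod_apply, ← lintegral_indicator hA]
  · have hshear : ⇑(MeasurableEquiv.shearMulRight G) = fun z => (z.1, z.1 * z.2) := rfl
    congr 1 with x
    by_cases hx : x ∈ A
    · rw [indicator_of_mem hx]
      congr 1 with y
      simp [hshear, hx]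
    · rw [indicator_of_notMem hx]
      convert measure_empty (μ := q)
      ext y
      simp [hshear, hx]
  · exact (MeasurableEquiv.shearMulRight G).measurable (hA.prod hB)

lemma eq_of_forall_ae_measure_preimage_mul_left_eq [IsProbabilityMeasure g]
    [IsProbabilityMeasure p] [IsProbabilityMeasure q]
    (h : ∀ B, MeasurableSet B → ∀ᵐ x ∂g, p ((x * ·) ⁻¹' B) = q ((x * ·) ⁻¹' B)) : p = q := by
  have hshear : (g.prod p).map (MeasurableEquiv.shearMulRight G)
      = (g.prod q).map (MeasurableEquiv.shearMulRight G) := by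
    refine ext_of_generate_finite _ generateFrom_prod.symm isPiSystem_prod ?_
      (by simp [MeasurableEquiv.map_apply])
    rintro _ ⟨A, hA, B, hB, rfl⟩
    rw [map_shearMulRight_prod_apply_prod hA hB, map_shearMulRight_prod_apply_prod hA hB]
    exact lintegral_congr_ae (ae_restrict_of_ae (h B hB))
  have hprod : g.prod p = g.prod q := by
    simpa using congrArg (Measure.map (MeasurableEquiv.shearMulRight G).symm) hshear
  rw [← Measure.snd_prod (μ := g) (ν := p), hprod, Measure.snd_prod]

lemma eq_of_mconv_idem_of_mconv_eq_left [IsProbabilityMeasure g] [IsProbabilityMeasure p]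
    (hgg : g ∗ₘ g = g) (hpg : p ∗ₘ g = p) (hgp : g ∗ₘ p = g) : p = g := by
  refine eq_of_forall_ae_measure_preimage_mul_left_eq (g := g) fun B hB => ?_
  have h1 : ∀ x, ‖B.indicator (1 : G → ℝ) x‖ ≤ 1 := fun x => by
    by_cases hx : x ∈ B <;> simp [hx]
  filter_upwards [rightAvg_ae_eq_of_mconv_eq hgg hpg hgp (measurable_one.indicator hB) h1]
    with x hx
  rwa [rightAvg_indicator_one hB, rightAvg_indicator_one hB, measureReal_eq_measureReal_iff] at hx

lemma eq_of_mconv_idem_of_mconv_eq_right [IsProbabilityMeasure g] [IsProbabilityMeasure p]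
    (hgg : g ∗ₘ g = g) (hpg : p ∗ₘ g = g) (hgp : g ∗ₘ p = p) : p = g := by
  have : IsProbabilityMeasure g.inv := Measure.isProbabilityMeasure_map measurable_inv.aemeasurable
  have : IsProbabilityMeasure p.inv := Measure.isProbabilityMeasure_map measurable_inv.aemeasurable
  have h := eq_of_mconv_idem_of_mconv_eq_left (g := g.inv) (p := p.inv)
    (by rw [← inv_mconv, hgg]) (by rw [← inv_mconv, hgp]) (by rw [← inv_mconv, hpg])
  simpa using congrArg Measure.inv h

end Group

section InverseSemigroup

-- `hL` and `hR` say that an idempotent is the only element of its 𝓛-class, resp. 𝓡-class.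

variable {M : Type*} [Semigroup M]

lemma isIdempotentElem_mul
    (hL : ∀ p g : M, IsIdempotentElem g → p * g = p → g * p = g → p = g)
    (hR : ∀ p g : M, IsIdempotentElem g → p * g = g → g * p = p → p = g)
    {e f : M} (he : IsIdempotentElem e) (hf : IsIdempotentElem f)
    (hreg : ∃ x, e * f * x * (e * f) = e * f) : IsIdempotentElem (e * f) := by
  obtain ⟨x, hx⟩ := hreg
  unfold IsIdempotentElem at *
  -- `f x' e`, where `x' = x (e f) x` is an inverse of `e f`
  have hg : IsIdempotentElem (f * x * e * f * x * e) := by unfold IsIdempotentElem; grind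
  have h₁ := hL (e * f * (f * x * e * f * x * e)) _ hg (by grind) (by grind)
  have h₂ := hR (f * x * e * f * x * e * (e * f)) _ hg (by grind) (by grind)
  grind

lemma mul_comm_of_isIdempotentElem
    (hL : ∀ p g : M, IsIdempotentElem g → p * g = p → g * p = g → p = g)
    (hR : ∀ p g : M, IsIdempotentElem g → p * g = g → g * p = p → p = g)
    (hreg : ∀ a : M, ∃ x, a * x * a = a)
    {e f : M} (he : IsIdempotentElem e) (hf : IsIdempotentElem f) : e * f = f * e := by
  have hef := isIdempotentElem_mul hL hR he hf (hreg _)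
  have hfe := isIdempotentElem_mul hL hR hf he (hreg _)
  unfold IsIdempotentElem at *
  have hr : IsIdempotentElem (e * f * e) := by unfold IsIdempotentElem; grind
  have h₁ : e * f = e * f * e := hR _ _ hr (by grind) (by grind)
  have h₂ : f * e = e * f * e := hL _ _ hr (by grind) (by grind)
  rw [h₁, h₂]

lemma existsUnique_inverse
    (hcomm : ∀ e f : M, IsIdempotentElem e → IsIdempotentElem f → e * f = f * e)
    (hreg : ∀ a : M, ∃ x, a * x * a = a) (a : M) : ∃! b, a * b * a = a ∧ b * a * b = b := by
  obtain ⟨x, hx⟩ := hreg a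
  have inverse_unique : ∀ b c, a * b * a = a → b * a * b = b → a * c * a = a → c * a * c = c →
      b = c := by
    intro b c hb₁ hb₂ hc₁ hc₂
    have h₁ := hcomm (b * a) (c * a) (by unfold IsIdempotentElem; grind)
      (by unfold IsIdempotentElem; grind)
    have h₂ := hcomm (a * b) (a * c) (by unfold IsIdempotentElem; grind)
      (by unfold IsIdempotentElem; grind)
    calc b = b * a * (c * a) * b := by grind
      _ = c * a * (b * a) * b := by rw [h₁]
      _ = c * (a * c) * (a * b) := by grind
      _ = c * (a * b) * (a * c) := by rw [mul_assoc, mul_assoc c, h₂]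
      _ = c := by grind
  exact ⟨x * a * x, ⟨by grind, by grind⟩,
    fun b ⟨hb₁, hb₂⟩ => inverse_unique _ _ hb₁ hb₂ (by grind) (by grind)⟩

end InverseSemigroup

theorem regular_convolution_subsemigroup_is_inverse_general {G : Type*} [Group G] [TopologicalSpace G]
    [IsTopologicalGroup G] [MeasurableSpace G] [BorelSpace G] [MeasurableMul₂ G]
    {S : Set (Measure G)} (hradon : ∀ μ ∈ S, IsRadonProb μ)
    (hmul : ∀ μ ∈ S, ∀ ν ∈ S, mconv μ ν ∈ S)
    (hreg : ∀ μ ∈ S, ∃ ν ∈ S, mconv (mconv μ ν) μ = μ) :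
    (∀ μ ∈ S, ∃! ν, ν ∈ S ∧ mconv (mconv μ ν) μ = μ ∧ mconv (mconv ν μ) ν = ν) ∧
      ∀ e ∈ S, ∀ f ∈ S, mconv e e = e → mconv f f = f → mconv e f = mconv f e := by
  have hprob (μ : S) : IsProbabilityMeasure μ.1 := ⟨(hradon μ μ.2).1⟩
  -- `mconv` is definitionally `Measure.mconv`, so the hypotheses feed the `∗ₘ` lemmas directly.
  let : Semigroup S :=
    { mul := fun μ ν => ⟨mconv μ ν, hmul μ μ.2 ν ν.2⟩
      mul_assoc := fun μ ν ρ => Subtype.ext (Measure.mconv_assoc μ.1 ν.1 ρ.1) }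
  have hL (p g : S) (hg : IsIdempotentElem g) (hpg : p * g = p) (hgp : g * p = g) : p = g :=
    Subtype.ext (eq_of_mconv_idem_of_mconv_eq_left (congrArg Subtype.val hg)
      (congrArg Subtype.val hpg) (congrArg Subtype.val hgp))
  have hR (p g : S) (hg : IsIdempotentElem g) (hpg : p * g = g) (hgp : g * p = p) : p = g :=
    Subtype.ext (eq_of_mconv_idem_of_mconv_eq_right (congrArg Subtype.val hg)
      (congrArg Subtype.val hpg) (congrArg Subtype.val hgp))
  have hregS (μ : S) : ∃ ν, μ * ν * μ = μ :=
    let ⟨ν, hν, h⟩ := hreg μ μ.2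
    ⟨⟨ν, hν⟩, Subtype.ext h⟩
  have hcomm (e f : S) : IsIdempotentElem e → IsIdempotentElem f → e * f = f * e :=
    mul_comm_of_isIdempotentElem hL hR hregS
  refine ⟨fun μ hμ => ?_, fun e he f hf hee hff =>
    congrArg Subtype.val (hcomm ⟨e, he⟩ ⟨f, hf⟩ (Subtype.ext hee) (Subtype.ext hff))⟩
  obtain ⟨ν, hν, huniq⟩ := existsUnique_inverse hcomm hregS ⟨μ, hμ⟩
  exact ⟨ν, ⟨ν.2, congrArg Subtype.val hν.1, congrArg Subtype.val hν.2⟩,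
    fun ρ ⟨hρ, h₁, h₂⟩ =>
      congrArg Subtype.val (huniq ⟨ρ, hρ⟩ ⟨Subtype.ext h₁, Subtype.ext h₂⟩)⟩

/-- A regular subsemigroup of the convolution semigroup of Radon probability measures on a
Hausdorff topological group is an inverse semigroup: inverses are unique and idempotents
commute. -/
theorem regular_convolution_subsemigroup_is_inverse {G : Type*} [Group G] [TopologicalSpace G]
    [IsTopologicalGroup G] [T2Space G] [MeasurableSpace G] [BorelSpace G] [MeasurableMul₂ G]
    {S : Set (Measure G)} (hradon : ∀ μ ∈ S, IsRadonProb μ)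
    (hmul : ∀ μ ∈ S, ∀ ν ∈ S, mconv μ ν ∈ S)
    (hreg : ∀ μ ∈ S, ∃ ν ∈ S, mconv (mconv μ ν) μ = μ) :
    (∀ μ ∈ S, ∃! ν, ν ∈ S ∧ mconv (mconv μ ν) μ = μ ∧ mconv (mconv ν μ) ν = ν) ∧
      ∀ e ∈ S, ∀ f ∈ S, mconv e e = e → mconv f f = f → mconv e f = mconv f e :=
  regular_convolution_subsemigroup_is_inverse_general hradon hmul hreg
end

section
/- Let G be a Hausdorff topological group and let K, L be nonempty compact subsets of G with K·L·K = K and L·K·L = L. Then K·K = K if and only if (K·K·L)·(K·K·L) = K·K·L; that is, a regular element K of exp(G) is an idempotent if and only if K²·K⁻¹ is an idempotent, where K⁻¹ denotes the inverse of K in exp(G). -/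
/-!
A nonempty compact subsemigroup of a Hausdorff topological group is a subgroup: if `y` is a
cluster point of the powers of `s`, then `s⁻¹ = s⁻¹ y⁻¹ y` is a cluster point of the powers
`s⁻¹ (s ^ a)⁻¹ s ^ b = s ^ (b - a - 1)`. So `P = K L` (idempotent because `K L K = K`) and
`K K L = K P` are subgroups. Then `1 ∈ K P` makes `K` meet `P`; as `K l ⊆ P` for `l ∈ L` and
`P K = K`, this forces `K = P`, which is idempotent.
-/

open Set Pointwise Filter

theorem pow_succ_mem_of_mul_subset {G : Type*} [Monoid G] {S : Set G} (hS : S * S ⊆ S)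
    {s : G} (hs : s ∈ S) (n : ℕ) : s ^ (n + 1) ∈ S := by
  induction n with
  | zero => simpa using hs
  | succ n ih => rw [pow_succ]; exact hS (mul_mem_mul ih hs)

theorem IsCompact.inv_mem_of_mul_subset {G : Type*} [Group G] [TopologicalSpace G]
    [IsTopologicalGroup G] [T2Space G] {S : Set G} (hS : IsCompact S) (hSS : S * S ⊆ S)
    {s : G} (hs : s ∈ S) : s⁻¹ ∈ S := by
  have hpow := pow_succ_mem_of_mul_subset hSS hs
  obtain ⟨y, -, hy⟩ := hS.exists_mapClusterPt_of_frequently (f := (s ^ · : ℕ → G))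
    (l := atTop) ((eventually_ge_atTop 1).mono fun n hn => by
      obtain ⟨m, rfl⟩ := Nat.exists_eq_add_of_le' hn; exact hpow m).frequently
  have hcont : ContinuousAt (fun p : G × G => s⁻¹ * p.1⁻¹ * p.2) (y, y) := by fun_prop
  have hcl := (hy.curry_prodMap hy).continuousAt_comp hcont
  simp only [inv_mul_cancel_right] at hcl
  refine hS.isClosed.mem_of_mapClusterPt hcl (eventually_curry_iff.2 ?_)
  refine Eventually.of_forall fun a => (eventually_ge_atTop (a + 2)).mono fun b hb => ?_
  obtain ⟨n, rfl⟩ := Nat.exists_eq_add_of_le hb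
  have hquot : s⁻¹ * (s ^ a)⁻¹ * s ^ (a + 2 + n) = s ^ (n + 1) := by
    rw [add_comm a, add_assoc, pow_add, add_comm, pow_succ]; group
  simpa [hquot] using hpow n

theorem IsCompact.exists_subgroup_coe_eq_of_mul_subset {G : Type*} [Group G]
    [TopologicalSpace G] [IsTopologicalGroup G] [T2Space G] {S : Set G} (hS : IsCompact S)
    (hne : S.Nonempty) (hSS : S * S ⊆ S) : ∃ H : Subgroup G, (H : Set G) = S := by
  obtain ⟨s, hs⟩ := hne
  refine ⟨{ carrier := S
            mul_mem' := fun ha hb => hSS (mul_mem_mul ha hb)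
            one_mem' := ?_
            inv_mem' := hS.inv_mem_of_mul_subset hSS }, rfl⟩
  simpa using hSS (mul_mem_mul hs (hS.inv_mem_of_mul_subset hSS hs))

theorem eq_coe_of_mul_eq_coe_of_one_mem {G : Type*} [Group G] {H : Subgroup G} {K L : Set G}
    (hKL : K * L = H) (hHK : (H : Set G) * K ⊆ K) (hL : L.Nonempty)
    (h1 : (1 : G) ∈ K * (H : Set G)) : K = H := by
  obtain ⟨k, hk, h, hh, hkh⟩ := h1
  have hkH : k ∈ H := by rw [eq_inv_of_mul_eq_one_left hkh]; exact H.inv_mem hh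
  obtain ⟨l, hl⟩ := hL
  have hKl : ∀ x ∈ K, x * l ∈ H := fun x hx => by
    rw [← SetLike.mem_coe, ← hKL]; exact mul_mem_mul hx hl
  have hlH : l ∈ H := (H.mul_mem_cancel_left hkH).1 (hKl k hk)
  refine Subset.antisymm (fun x hx => ?_) (fun x hx => ?_)
  · exact (H.mul_mem_cancel_right hlH).1 (hKl x hx)
  · simpa using hHK (mul_mem_mul (H.mul_mem hx (H.inv_mem hkH)) hk)

theorem idempotent_iff_sq_mul_inv_idempotent_general {G : Type*} [Group G] [TopologicalSpace G]
    [IsTopologicalGroup G] [T2Space G] {K L : Set G} (hKne : K.Nonempty) (hKc : IsCompact K)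
    (hLne : L.Nonempty) (hLc : IsCompact L) (h1 : K * L * K = K) :
    K * K = K ↔ (K * K * L) * (K * K * L) = K * K * L := by
  have hP : K * L * (K * L) = K * L := by rw [← mul_assoc, h1]
  constructor
  · intro hK
    rw [hK, hP]
  · intro hE
    obtain ⟨H, hH⟩ := (hKc.mul hLc).exists_subgroup_coe_eq_of_mul_subset (hKne.mul hLne) hP.le
    obtain ⟨E, hEK⟩ := ((hKc.mul hKc).mul hLc).exists_subgroup_coe_eq_of_mul_subset
      ((hKne.mul hKne).mul hLne) hE.le
    have hKH : K = H := by
      refine eq_coe_of_mul_eq_coe_of_one_mem hH.symm (by rw [hH, h1]) hLne ?_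
      rw [hH, ← mul_assoc, ← hEK]
      exact E.one_mem
    rw [hKH, coe_mul_coe]

/-- A regular element `K` of the semigroup `exp G` of nonempty compact subsets of a Hausdorff
topological group, with inverse `L`, is an idempotent iff `K² * K⁻¹ = K * K * L` is an
idempotent. -/
theorem idempotent_iff_sq_mul_inv_idempotent {G : Type*} [Group G] [TopologicalSpace G]
    [IsTopologicalGroup G] [T2Space G] {K L : Set G} (hKne : K.Nonempty) (hKc : IsCompact K)
    (hLne : L.Nonempty) (hLc : IsCompact L) (h1 : K * L * K = K) (h2 : L * K * L = L) :
    K * K = K ↔ (K * K * L) * (K * K * L) = K * K * L :=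
  idempotent_iff_sq_mul_inv_idempotent_general hKne hKc hLne hLc h1
end

section
/- Let μ and ν be Radon probability measures on a Hausdorff topological group G with μ∗ν = δ_1, the Dirac point mass at the identity element of G. Then there exists x ∈ G such that μ = δ_x and ν = δ_{x⁻¹}. -/
open MeasureTheory Set Pointwise Topology

/-! The set `{(x, y) | x * y = 1}` carries all of `μ.prod ν`, and its slices are the points
`x⁻¹` (resp. `y⁻¹`). By Fubini, the `μ`-average of the atoms `ν {x⁻¹}` is `1`; as each atom
has mass at most `1`, some atom carries all of `ν`, so `ν = δ_y`, and symmetrically `μ = δ_x`.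
Finally `δ_(x * y) = μ ∗ ν = δ_1` gives `y = x⁻¹`. -/

namespace MeasureTheory.Measure

variable {α : Type*} [MeasurableSpace α] [MeasurableSingletonClass α]

lemma eq_dirac_of_measure_singleton_eq_one {ν : Measure α} [IsProbabilityMeasure ν] {y : α}
    (hy : ν {y} = 1) : ν = dirac y := by
  have hae : ∀ᵐ x ∂ν, x ∈ ({y} : Set α) :=
    (prob_compl_eq_zero_iff (measurableSet_singleton y)).mpr hy
  rw [← restrict_eq_self_of_ae_mem hae, restrict_singleton, hy, one_smul]

lemma exists_eq_dirac_of_lintegral_measure_singleton_eq_one {β : Type*} [MeasurableSpace β]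
    {μ : Measure β} [IsProbabilityMeasure μ] {ν : Measure α} [IsProbabilityMeasure ν]
    (f : β → α) (h : ∫⁻ b, ν {f b} ∂μ = 1) : ∃ y, ν = dirac y := by
  have hae : (fun b ↦ ν {f b}) =ᵐ[μ] 1 :=
    ae_eq_of_ae_le_of_lintegral_le (.of_forall fun _ ↦ prob_le_one) (by simp [h])
      aemeasurable_const (by simp [h])
  obtain ⟨b, hb⟩ := hae.exists
  exact ⟨f b, eq_dirac_of_measure_singleton_eq_one hb⟩

variable {G : Type*} [Group G] [MeasurableSpace G] [MeasurableMul₂ G] [MeasurableSingletonClass G]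
  {μ ν : Measure G}

lemma prod_preimage_mul_one_eq_one_of_mconv_eq_dirac_one (h : μ ∗ₘ ν = dirac 1) :
    μ.prod ν ((fun p : G × G ↦ p.1 * p.2) ⁻¹' {1}) = 1 := by
  rw [← map_apply measurable_mul (measurableSet_singleton 1)]
  exact (congrArg (· {1}) h).trans (dirac_apply_of_mem (mem_singleton 1))

lemma lintegral_measure_singleton_inv_eq_one_of_mconv_eq_dirac_one [SFinite ν]
    (h : μ ∗ₘ ν = dirac 1) : ∫⁻ x, ν {x⁻¹} ∂μ = 1 := by
  rw [← prod_preimage_mul_one_eq_one_of_mconv_eq_dirac_one h,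
    prod_apply (measurable_mul (measurableSet_singleton 1))]
  congr! with x
  ext y
  simp [mul_eq_one_iff_eq_inv']

lemma lintegral_measure_singleton_inv_eq_one_of_mconv_eq_dirac_one' [SFinite μ] [SFinite ν]
    (h : μ ∗ₘ ν = dirac 1) : ∫⁻ y, μ {y⁻¹} ∂ν = 1 := by
  rw [← prod_preimage_mul_one_eq_one_of_mconv_eq_dirac_one h,
    prod_apply_symm (measurable_mul (measurableSet_singleton 1))]
  congr! with y
  ext x
  simp [mul_eq_one_iff_eq_inv]

theorem exists_eq_dirac_of_mconv_eq_dirac_one [IsProbabilityMeasure μ] [IsProbabilityMeasure ν]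
    (h : μ ∗ₘ ν = dirac 1) : ∃ x, μ = dirac x ∧ ν = dirac x⁻¹ := by
  obtain ⟨x, rfl⟩ := exists_eq_dirac_of_lintegral_measure_singleton_eq_one _
    (lintegral_measure_singleton_inv_eq_one_of_mconv_eq_dirac_one' h)
  obtain ⟨y, rfl⟩ := exists_eq_dirac_of_lintegral_measure_singleton_eq_one _
    (lintegral_measure_singleton_inv_eq_one_of_mconv_eq_dirac_one h)
  rw [dirac_mconv_dirac, dirac_eq_dirac_iff] at h
  exact ⟨x, rfl, by rw [eq_inv_of_mul_eq_one_right h]⟩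

end MeasureTheory.Measure

theorem mconv_eq_dirac_one_general {G : Type*} [Group G] [TopologicalSpace G]
    [T2Space G] [MeasurableSpace G] [BorelSpace G] [MeasurableMul₂ G]
    {μ ν : Measure G} (hμ : IsRadonProb μ) (hν : IsRadonProb ν)
    (h : mconv μ ν = Measure.dirac (1 : G)) :
    ∃ x : G, μ = Measure.dirac x ∧ ν = Measure.dirac x⁻¹ := by
  have : IsProbabilityMeasure μ := ⟨hμ.1⟩
  have : IsProbabilityMeasure ν := ⟨hν.1⟩
  exact Measure.exists_eq_dirac_of_mconv_eq_dirac_one h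

/-- If the convolution of two Radon probability measures on a Hausdorff topological group is
the Dirac measure at the identity, then both measures are Dirac measures at mutually inverse
points. -/
theorem mconv_eq_dirac_one {G : Type*} [Group G] [TopologicalSpace G] [IsTopologicalGroup G]
    [T2Space G] [MeasurableSpace G] [BorelSpace G] [MeasurableMul₂ G]
    {μ ν : Measure G} (hμ : IsRadonProb μ) (hν : IsRadonProb ν)
    (h : mconv μ ν = Measure.dirac (1 : G)) :
    ∃ x : G, μ = Measure.dirac x ∧ ν = Measure.dirac x⁻¹ :=
  mconv_eq_dirac_one_general hμ hν h
end

section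
/- A nonempty compact subset K of a Hausdorff topological group G satisfies K·K = K if and only if K is a compact subgroup of G, i.e., 1 ∈ K, K is closed under multiplication, and K⁻¹ = K. -/
/-!
By Ellis' lemma a nonempty compact subsemigroup of a Hausdorff semitopological semigroup
contains an idempotent, and in a group the only idempotent is `1`. If `K * K = K`, this gives
`1 ∈ K`, and applied to the compact subsemigroup `x • K` for `x ∈ K` it gives `1 ∈ x • K`,
i.e. `x⁻¹ ∈ K`.
-/

open Set Pointwise

section

variable {G : Type*} [Group G] [TopologicalSpace G] [ContinuousMul G] [T2Space G] {K : Set G}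

theorem IsCompact.one_mem_of_mul_subset (hc : IsCompact K) (hne : K.Nonempty)
    (hK : K * K ⊆ K) : (1 : G) ∈ K := by
  obtain ⟨e, he, hee⟩ :=
    exists_idempotent_in_compact_subsemigroup (continuous_mul_const ·) K hne hc
      fun x hx y hy => hK (mul_mem_mul hx hy)
  rwa [mul_eq_left.mp hee] at he

theorem IsCompact.inv_mem_of_mul_subset_s15 (hc : IsCompact K) (hK : K * K ⊆ K) {x : G}
    (hx : x ∈ K) : x⁻¹ ∈ K := by
  have hxK : x • K * x • K ⊆ x • K := by
    rintro _ ⟨_, ⟨a, ha, rfl⟩, _, ⟨b, hb, rfl⟩, rfl⟩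
    exact ⟨a * (x * b), hK (mul_mem_mul ha (hK (mul_mem_mul hx hb))), by simp [mul_assoc]⟩
  have h1 : (1 : G) ∈ x • K :=
    (hc.smul x).one_mem_of_mul_subset (nonempty_of_mem hx).smul_set hxK
  simpa using mem_smul_set_iff_inv_smul_mem.mp h1

end

/-- A nonempty compact subset `K` of a Hausdorff topological group satisfies `K * K = K` iff
`K` is a compact subgroup: it contains the identity, is closed under multiplication, and
satisfies `K⁻¹ = K`. -/
theorem sq_eq_self_iff_subgroup {G : Type*} [Group G] [TopologicalSpace G]
    [IsTopologicalGroup G] [T2Space G] {K : Set G} (hne : K.Nonempty) (hc : IsCompact K) :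
    K * K = K ↔ ((1 : G) ∈ K ∧ (∀ x ∈ K, ∀ y ∈ K, x * y ∈ K) ∧ K⁻¹ = K) := by
  constructor
  · intro hKK
    have hsub : K * K ⊆ K := hKK.subset
    refine ⟨hc.one_mem_of_mul_subset hne hsub, mul_subset_iff.mp hsub, ?_⟩
    refine inv_eq_self_iff_inv_subset.mpr fun x hx => ?_
    simpa using hc.inv_mem_of_mul_subset_s15 hsub (mem_inv.mp hx)
  · rintro ⟨h1, hmul, -⟩
    exact (mul_subset_iff.mpr hmul).antisymm (subset_mul_right K h1)
end
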